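/- Consider a logistic regression with offsets: let x_1,…,x_n ∈ ℝ^P be covariate vectors (rows of the n × P matrix X), s̄_1,…,s̄_n ∈ [0,1] fractional responses, and a_1,…,a_n ∈ ℝ offsets, and define ℓ*(β) = Σᵢ [s̄ᵢ·(xᵢᵀβ − aᵢ) − log(1 + exp(xᵢᵀβ − aᵢ))]. Given a current iterate β⁰, set ψᵢ = xᵢᵀβ⁰ − aᵢ, ωᵢ = tanh(ψᵢ/2)/(2ψᵢ) if ψᵢ ≠ 0 and ωᵢ = 1/4 if ψᵢ = 0, ηᵢ = (s̄ᵢ − 1/2 + ωᵢ·aᵢ)/ωᵢ, and Ω = diag(ω₁,…,ωₙ). If XᵀΩX is invertible, then the Pólya-gamma EM update β¹ = (XᵀΩX)⁻¹XᵀΩη satisfies ℓ*(β¹) ≥ ℓ*(β⁰). -/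

import Mathlib

/-!
Write `log (1 + exp z) = z / 2 + log 2 + log (cosh (z / 2))`. The weight
`ω(ψ) = tanh (ψ / 2) / (2ψ)` decreases in `|ψ|`, and `x ω(x)` is the derivative of
`log (cosh (x / 2))`; hence `ω(ψ) x² / 2 - log (cosh (x / 2))` is minimized at `x = ψ`, which is the
Pólya-gamma quadratic majorant of `log (1 + exp)` at `ψ`. It yields a quadratic minorant of `ℓ*`
touching it at `β⁰`; up to a constant this minorant is `-½ ∑ ωᵢ (xᵢᵀβ - ηᵢ)²`, which the weighted
least squares solution `β¹` maximizes.
-/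

open Matrix Real Set

namespace Real

theorem hasDerivAt_tanh (x : ℝ) : HasDerivAt tanh (1 / cosh x ^ 2) x := by
  have h := (hasDerivAt_sinh x).div (hasDerivAt_cosh x) (cosh_pos x).ne'
  rw [show sinh / cosh = tanh from funext fun y => (tanh_eq_sinh_div_cosh y).symm] at h
  refine h.congr_deriv ?_
  rw [← cosh_sq_sub_sinh_sq x]
  ring

theorem tanh_le_self {x : ℝ} (hx : 0 ≤ x) : tanh x ≤ x := by
  have hmono : Monotone fun y => y - tanh y := by
    refine monotone_of_hasDerivAt_nonneg (fun y => (hasDerivAt_id y).sub (hasDerivAt_tanh y))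
      fun y => ?_
    have := one_le_cosh y
    simp only [Pi.zero_apply, sub_nonneg]
    rw [div_le_one (by positivity)]
    nlinarith
  simpa using hmono hx

theorem antitoneOn_tanh_div_self : AntitoneOn (fun x => tanh x / x) (Ioi 0) := by
  refine antitoneOn_of_hasDerivWithinAt_nonpos (convex_Ioi 0)
    (fun x hx => ((hasDerivAt_tanh x).continuousAt.div continuousAt_id
      (ne_of_gt hx)).continuousWithinAt)
    (fun x hx => ((hasDerivAt_tanh x).div (hasDerivAt_id x) ?_).hasDerivWithinAt) fun x hx => ?_
  · rw [interior_Ioi] at hx; exact ne_of_gt hx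
  rw [interior_Ioi, mem_Ioi] at hx
  have hkey : x ≤ sinh x * cosh x := by
    have := self_le_sinh_iff.2 (by positivity : 0 ≤ 2 * x)
    rw [sinh_two_mul] at this
    linarith
  have hc := cosh_pos x
  rw [tanh_eq_sinh_div_cosh, id]
  apply div_nonpos_of_nonpos_of_nonneg _ (sq_nonneg x)
  rw [show 1 / cosh x ^ 2 * x - sinh x / cosh x * 1 = (x - sinh x * cosh x) / cosh x ^ 2 by
    field_simp]
  exact div_nonpos_of_nonpos_of_nonneg (by linarith) (by positivity)

theorem hasDerivAt_log_cosh (x : ℝ) : HasDerivAt (fun y => log (cosh y)) (tanh x) x := by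
  convert (hasDerivAt_cosh x).log (cosh_pos x).ne' using 1
  exact tanh_eq_sinh_div_cosh x

theorem log_one_add_exp (x : ℝ) : log (1 + exp x) = x / 2 + log 2 + log (cosh (x / 2)) := by
  have h : 1 + exp x = exp (x / 2) * (2 * cosh (x / 2)) := by
    rw [cosh_eq, mul_div_cancel₀ _ two_ne_zero, mul_add, ← exp_add, ← exp_add]
    ring_nf
    simp [add_comm]
  rw [h, log_mul (exp_pos _).ne' (by positivity), log_mul two_ne_zero (cosh_pos _).ne', log_exp]
  ring

end Real

noncomputable def pgWeight (ψ : ℝ) : ℝ := if ψ = 0 then 1 / 4 else tanh (ψ / 2) / (2 * ψ)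

theorem mul_pgWeight (x : ℝ) : x * pgWeight x = tanh (x / 2) / 2 := by
  unfold pgWeight
  split_ifs with hx
  · simp [hx]
  · field_simp

theorem pgWeight_neg (ψ : ℝ) : pgWeight (-ψ) = pgWeight ψ := by
  simp only [pgWeight, neg_eq_zero, neg_div, tanh_neg]
  split_ifs <;> ring

theorem pgWeight_abs (ψ : ℝ) : pgWeight |ψ| = pgWeight ψ := by
  rcases abs_choice ψ with h | h <;> rw [h]
  exact pgWeight_neg ψ

theorem pgWeight_eq_tanh_div_self {x : ℝ} (hx : x ≠ 0) :
    pgWeight x = tanh (x / 2) / (x / 2) / 4 := by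
  rw [pgWeight, if_neg hx]
  field_simp
  ring

theorem pgWeight_pos (ψ : ℝ) : 0 < pgWeight ψ := by
  rw [← pgWeight_abs]
  rcases (abs_nonneg ψ).eq_or_lt with h | h
  · simp [pgWeight, ← h]
  · rw [pgWeight_eq_tanh_div_self h.ne']
    have : 0 < tanh (|ψ| / 2) := by
      rw [tanh_eq_sinh_div_cosh]
      exact div_pos (sinh_pos_iff.2 (by positivity)) (cosh_pos _)
    positivity

theorem pgWeight_antitoneOn : AntitoneOn pgWeight (Ici 0) := by
  intro s hs t ht hst
  rcases (mem_Ici.1 hs).eq_or_lt with rfl | hs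
  · rcases (mem_Ici.1 ht).eq_or_lt with rfl | ht
    · rfl
    rw [pgWeight_eq_tanh_div_self ht.ne', pgWeight, if_pos rfl]
    have := (div_le_one (by positivity)).2 (tanh_le_self (by positivity : 0 ≤ t / 2))
    linarith
  · rw [pgWeight_eq_tanh_div_self hs.ne', pgWeight_eq_tanh_div_self (hs.trans_le hst).ne']
    have := antitoneOn_tanh_div_self (mem_Ioi.2 (half_pos hs))
      (mem_Ioi.2 (half_pos (hs.trans_le hst))) (div_le_div_of_nonneg_right hst zero_le_two)
    dsimp only at this
    linarith

theorem log_cosh_half_sub_le_of_nonneg {s t : ℝ} (hs : 0 ≤ s) (ht : 0 ≤ t) :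
    log (cosh (t / 2)) - log (cosh (s / 2)) ≤ pgWeight s / 2 * (t ^ 2 - s ^ 2) := by
  set F : ℝ → ℝ := fun x => pgWeight s / 2 * x ^ 2 - log (cosh (x / 2))
  have hF : ∀ x, HasDerivAt F (x * (pgWeight s - pgWeight x)) x := fun x => by
    have h := ((hasDerivAt_pow 2 x).const_mul (pgWeight s / 2)).sub
      ((hasDerivAt_log_cosh (x / 2)).comp x ((hasDerivAt_id x).div_const 2))
    refine h.congr_deriv ?_
    rw [mul_sub, mul_pgWeight]
    norm_num
    ring
  have hFcont : ContinuousOn F (Ici 0) := fun x _ => (hF x).continuousAt.continuousWithinAt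
  have hF_anti : AntitoneOn F (Icc 0 s) := by
    refine antitoneOn_of_hasDerivWithinAt_nonpos (convex_Icc 0 s) (hFcont.mono Icc_subset_Ici_self)
      (fun x _ => (hF x).hasDerivWithinAt) fun x hx => ?_
    rw [interior_Icc] at hx
    exact mul_nonpos_of_nonneg_of_nonpos hx.1.le (sub_nonpos.2 <|
      pgWeight_antitoneOn (mem_Ici.2 hx.1.le) (mem_Ici.2 hs) hx.2.le)
  have hF_mono : MonotoneOn F (Ici s) := by
    refine monotoneOn_of_hasDerivWithinAt_nonneg (convex_Ici s) (hFcont.mono (Ici_subset_Ici.2 hs))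
      (fun x _ => (hF x).hasDerivWithinAt) fun x hx => ?_
    rw [interior_Ici] at hx
    exact mul_nonneg (hs.trans hx.le) (sub_nonneg.2 <|
      pgWeight_antitoneOn (mem_Ici.2 hs) (mem_Ici.2 (hs.trans hx.le)) hx.le)
  have hFst : F s ≤ F t := by
    rcases le_total t s with hts | hst
    · exact hF_anti ⟨ht, hts⟩ ⟨hs, le_rfl⟩ hts
    · exact hF_mono self_mem_Ici hst hst
  simp only [F] at hFst
  linarith

theorem log_cosh_half_sub_le (ψ z : ℝ) :
    log (cosh (z / 2)) - log (cosh (ψ / 2)) ≤ pgWeight ψ / 2 * (z ^ 2 - ψ ^ 2) := by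
  have h := log_cosh_half_sub_le_of_nonneg (abs_nonneg ψ) (abs_nonneg z)
  have hcosh : ∀ x : ℝ, cosh (|x| / 2) = cosh (x / 2) := fun x => by
    rw [← cosh_abs (x / 2), abs_div, abs_two]
  rwa [pgWeight_abs, sq_abs, sq_abs, hcosh, hcosh] at h

theorem log_one_add_exp_le_pgWeight (ψ z : ℝ) :
    log (1 + exp z) ≤ log (1 + exp ψ) + (z - ψ) / 2 + pgWeight ψ / 2 * (z ^ 2 - ψ ^ 2) := by
  rw [log_one_add_exp z, log_one_add_exp ψ]
  linarith [log_cosh_half_sub_le ψ z]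

theorem pgWeight_mul_sq_sub_le_logLik_sub {s a z₀ z₁ η : ℝ}
    (hη : pgWeight (z₀ - a) * η = s - 1 / 2 + pgWeight (z₀ - a) * a) :
    pgWeight (z₀ - a) / 2 * ((z₀ - η) ^ 2 - (z₁ - η) ^ 2) ≤
      (s * (z₁ - a) - log (1 + exp (z₁ - a))) - (s * (z₀ - a) - log (1 + exp (z₀ - a))) := by
  have h := log_one_add_exp_le_pgWeight (z₀ - a) (z₁ - a)
  have hquad : (s - 1 / 2) * (z₁ - z₀) - pgWeight (z₀ - a) / 2 * ((z₁ - a) ^ 2 - (z₀ - a) ^ 2) =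
      pgWeight (z₀ - a) / 2 * ((z₀ - η) ^ 2 - (z₁ - η) ^ 2) := by
    linear_combination (z₀ - z₁) * hη
  linarith

section WeightedLeastSquares

variable {m p : Type*} [Fintype m] [Fintype p] {X : Matrix m p ℝ} {w η : m → ℝ}

theorem transpose_mulVec_weighted_residual_eq_zero [DecidableEq m] [DecidableEq p]
    (hA : IsUnit (Xᵀ * diagonal w * X)) :
    Xᵀ *ᵥ (w * (X *ᵥ ((Xᵀ * diagonal w * X)⁻¹ *ᵥ ((Xᵀ * diagonal w) *ᵥ η)) - η)) = 0 := by
  set β₁ := (Xᵀ * diagonal w * X)⁻¹ *ᵥ ((Xᵀ * diagonal w) *ᵥ η)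
  have hnormal : (Xᵀ * diagonal w * X) *ᵥ β₁ = (Xᵀ * diagonal w) *ᵥ η := by
    rw [mulVec_mulVec, mul_nonsing_inv _ ((isUnit_iff_isUnit_det _).mp hA), one_mulVec]
  clear_value β₁
  have hdiag : w * (X *ᵥ β₁ - η) = diagonal w *ᵥ (X *ᵥ β₁ - η) :=
    funext fun i => (mulVec_diagonal w _ i).symm
  rw [hdiag, mulVec_sub, mulVec_sub, mulVec_mulVec, mulVec_mulVec, mulVec_mulVec, hnormal, sub_self]

theorem sum_mul_sq_residual_le_of_normal_eq (hw : ∀ i, 0 ≤ w i) {β₁ : p → ℝ}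
    (hnormal : Xᵀ *ᵥ (w * (X *ᵥ β₁ - η)) = 0) (β : p → ℝ) :
    ∑ i, w i * ((X *ᵥ β₁) i - η i) ^ 2 ≤ ∑ i, w i * ((X *ᵥ β) i - η i) ^ 2 := by
  set d := X *ᵥ (β - β₁)
  have hcross : ∑ i, w i * ((X *ᵥ β₁) i - η i) * d i = 0 := by
    have := congrArg (· ⬝ᵥ (β - β₁)) hnormal
    simp only [zero_dotProduct, mulVec_transpose, ← dotProduct_mulVec] at this
    simpa only [dotProduct, Pi.mul_apply, Pi.sub_apply] using this
  have hsplit : ∀ i, (X *ᵥ β) i - η i = ((X *ᵥ β₁) i - η i) + d i := fun i => by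
    simp only [d, mulVec_sub, Pi.sub_apply, sub_add_sub_cancel']
  calc ∑ i, w i * ((X *ᵥ β₁) i - η i) ^ 2
      ≤ ∑ i, w i * ((X *ᵥ β₁) i - η i) ^ 2 + 2 * ∑ i, w i * ((X *ᵥ β₁) i - η i) * d i
          + ∑ i, w i * d i ^ 2 := by
        rw [hcross]
        have hd : 0 ≤ ∑ i, w i * d i ^ 2 := Finset.sum_nonneg fun i _ => by have := hw i; positivity
        linarith
    _ = ∑ i, w i * ((X *ᵥ β) i - η i) ^ 2 := by
        simp only [hsplit, Finset.mul_sum, ← Finset.sum_add_distrib]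
        exact Finset.sum_congr rfl fun i _ => by ring

end WeightedLeastSquares

theorem polya_gamma_wls_update_monotone_general (n P : ℕ)
    (X : Matrix (Fin n) (Fin P) ℝ)
    (sbar : Fin n → ℝ)
    (a : Fin n → ℝ) (β0 : Fin P → ℝ)
    (ψ : Fin n → ℝ) (hψ : ψ = fun i => (X *ᵥ β0) i - a i)
    (ω : Fin n → ℝ)
    (hω : ω = fun i => if ψ i = 0 then 1 / 4 else Real.tanh (ψ i / 2) / (2 * ψ i))
    (η : Fin n → ℝ) (hη : η = fun i => (sbar i - 1 / 2 + ω i * a i) / ω i)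
    (hinv : IsUnit (Xᵀ * Matrix.diagonal ω * X))
    (β1 : Fin P → ℝ)
    (hβ1 : β1 = (Xᵀ * Matrix.diagonal ω * X)⁻¹ *ᵥ ((Xᵀ * Matrix.diagonal ω) *ᵥ η)) :
    (∑ i, (sbar i * ((X *ᵥ β1) i - a i) - Real.log (1 + Real.exp ((X *ᵥ β1) i - a i)))) ≥
      ∑ i, (sbar i * ((X *ᵥ β0) i - a i) - Real.log (1 + Real.exp ((X *ᵥ β0) i - a i))) := by
  have hω_eq : ∀ i, ω i = pgWeight ((X *ᵥ β0) i - a i) := by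
    subst hω hψ; exact fun i => rfl
  have hη_eq : ∀ i, ω i * η i = sbar i - 1 / 2 + ω i * a i := fun i => by
    rw [hη, mul_div_cancel₀ _ (hω_eq i ▸ pgWeight_pos _).ne']
  have hls := sum_mul_sq_residual_le_of_normal_eq (fun i => (hω_eq i ▸ pgWeight_pos _).le)
    (hβ1 ▸ transpose_mulVec_weighted_residual_eq_zero hinv) β0
  rw [ge_iff_le, ← sub_nonneg, ← Finset.sum_sub_distrib]
  calc (0 : ℝ)
      ≤ (∑ i, ω i * ((X *ᵥ β0) i - η i) ^ 2 - ∑ i, ω i * ((X *ᵥ β1) i - η i) ^ 2) / 2 := by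
        linarith
    _ = ∑ i, ω i / 2 * (((X *ᵥ β0) i - η i) ^ 2 - ((X *ᵥ β1) i - η i) ^ 2) := by
        rw [← Finset.sum_sub_distrib, Finset.sum_div]
        exact Finset.sum_congr rfl fun i _ => by ring
    _ ≤ _ := Finset.sum_le_sum fun i _ => by
        simpa only [hω_eq i] using pgWeight_mul_sq_sub_le_logLik_sub (hω_eq i ▸ hη_eq i)

/-- Monotone ascent of the Pólya-gamma weighted least squares update for logistic
regression with offsets: with fractional responses `s̄ᵢ ∈ [0,1]`, offsets `aᵢ`,
`ℓ*(β) = Σᵢ [s̄ᵢ·(xᵢᵀβ − aᵢ) − log(1 + exp(xᵢᵀβ − aᵢ))]`, current iterate `β⁰`,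
`ψᵢ = xᵢᵀβ⁰ − aᵢ`, Pólya-gamma weights `ωᵢ = tanh(ψᵢ/2)/(2ψᵢ)` (`1/4` at `ψᵢ = 0`),
`ηᵢ = (s̄ᵢ − 1/2 + ωᵢaᵢ)/ωᵢ` and `Ω = diag(ω)`, if `XᵀΩX` is invertible then the
update `β¹ = (XᵀΩX)⁻¹XᵀΩη` satisfies `ℓ*(β¹) ≥ ℓ*(β⁰)`. -/
theorem polya_gamma_wls_update_monotone (n P : ℕ)
    (X : Matrix (Fin n) (Fin P) ℝ)
    (sbar : Fin n → ℝ) (hs : ∀ i, sbar i ∈ Set.Icc (0 : ℝ) 1)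
    (a : Fin n → ℝ) (β0 : Fin P → ℝ)
    (ψ : Fin n → ℝ) (hψ : ψ = fun i => (X *ᵥ β0) i - a i)
    (ω : Fin n → ℝ)
    (hω : ω = fun i => if ψ i = 0 then 1 / 4 else Real.tanh (ψ i / 2) / (2 * ψ i))
    (η : Fin n → ℝ) (hη : η = fun i => (sbar i - 1 / 2 + ω i * a i) / ω i)
    (hinv : IsUnit (Xᵀ * Matrix.diagonal ω * X))
    (β1 : Fin P → ℝ)
    (hβ1 : β1 = (Xᵀ * Matrix.diagonal ω * X)⁻¹ *ᵥ ((Xᵀ * Matrix.diagonal ω) *ᵥ η)) :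
    (∑ i, (sbar i * ((X *ᵥ β1) i - a i) - Real.log (1 + Real.exp ((X *ᵥ β1) i - a i)))) ≥
      ∑ i, (sbar i * ((X *ᵥ β0) i - a i) - Real.log (1 + Real.exp ((X *ᵥ β0) i - a i))) :=
  polya_gamma_wls_update_monotone_general n P X sbar a β0 ψ hψ ω hω η hη hinv β1 hβ1
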